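/- Let d ≥ 1, let v : 𝕋^d → ℝ^d be a Lipschitz divergence-free vector field with flow ψ, let φ : 𝕋^d → ℝ be a nonnegative integrable function, and let φ_* be the almost-everywhere limit of the Birkhoff averages (1/t)∫_0^t φ(ψ(τ,·)) dτ as t → +∞. Assume φ_*(x) > 0 for almost every x. Let p ∈ [1,∞), θ_0 ∈ L^p(𝕋^d), and let θ be the solution of ∂_t θ + v·∇θ = −φ θ with θ(0,·) = θ_0, i.e. θ(t,ψ(t,x)) = θ_0(x) exp(−∫_0^t φ(ψ(τ,x)) dτ). Then ‖θ(t)‖_{L^p} → 0 as t → +∞. -/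

import Mathlib

/-!
Along a characteristic the solution is `θ₀ x · exp (-∫₀ᵗ φ(ψ τ x) dτ)`. Where the Birkhoff limit
`φ_*(x)` is positive the exponent grows like `t · φ_*(x)`, so this tends to `0` for a.e. `x`, and
since `φ ≥ 0` it is dominated by `|θ₀ x|`; dominated convergence gives decay of the `L^p` norm in
Lagrangian coordinates, and because each `ψ t` preserves the measure, the `L^p` norm of `θ t` is
the same.
-/

open MeasureTheory Filter Topology

noncomputable section

/-- The `d`-dimensional torus `ℝ^d/ℤ^d`, equipped with the normalized Lebesgue (Haar)
measure `volume`. -/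
abbrev Torus (d : ℕ) := Fin d → AddCircle (1 : ℝ)

/-- The canonical projection `ℝ^d → 𝕋^d`. -/
def Torus.proj (d : ℕ) (y : Fin d → ℝ) : Torus d := fun i => (y i : AddCircle (1 : ℝ))

/-- `ψ : ℝ × 𝕋^d → 𝕋^d` is the flow of the (autonomous) vector field `v : 𝕋^d → ℝ^d`:
it is a one-parameter group of transformations, `ψ(0,x) = x`, and for every `x` the orbit
`t ↦ ψ(t,x)` lifts to a curve `X : ℝ → ℝ^d` solving the ODE `Ẋ(t) = v(ψ(t,x))`. -/
def IsFlowOf (d : ℕ) (v : Torus d → Fin d → ℝ) (ψ : ℝ → Torus d → Torus d) : Prop :=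
  (∀ x, ψ 0 x = x) ∧ (∀ s t : ℝ, ψ t ∘ ψ s = ψ (t + s)) ∧
    ∀ x : Torus d, ∃ X : ℝ → Fin d → ℝ,
      (∀ t : ℝ, Torus.proj d (X t) = ψ t x) ∧ ∀ t : ℝ, HasDerivAt X (v (ψ t x)) t

open scoped ENNReal

theorem tendsto_eLpNorm_zero_of_dominated {ι α E F : Type*} {l : Filter ι}
    [l.IsCountablyGenerated] [MeasurableSpace α] {μ : Measure α}
    [NormedAddCommGroup E] [NormedAddCommGroup F] {p : ℝ≥0∞} (hp : p ≠ ∞)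
    {f : ι → α → E} {g : α → F} (hf : ∀ᶠ i in l, AEStronglyMeasurable (f i) μ)
    (hg : MemLp g p μ) (hfg : ∀ᶠ i in l, ∀ᵐ x ∂μ, ‖f i x‖ ≤ ‖g x‖)
    (hlim : ∀ᵐ x ∂μ, Tendsto (fun i => f i x) l (𝓝 0)) :
    Tendsto (fun i => eLpNorm (f i) p μ) l (𝓝 0) := by
  rcases eq_or_ne p 0 with rfl | hp0
  · simpa using tendsto_const_nhds
  have hp_pos : 0 < p.toReal := ENNReal.toReal_pos hp0 hp
  have hpow : ∀ᵐ x ∂μ, Tendsto (fun i => ‖f i x‖ₑ ^ p.toReal) l (𝓝 0) :=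
    hlim.mono fun x hx => by
      simpa [Function.comp_def, ENNReal.zero_rpow_of_pos hp_pos] using
        ((ENNReal.continuous_rpow_const (y := p.toReal)).tendsto _).comp
          ((continuous_enorm.tendsto _).comp hx)
  have hlintegral : Tendsto (fun i => ∫⁻ x, ‖f i x‖ₑ ^ p.toReal ∂μ) l (𝓝 0) := by
    simpa using tendsto_lintegral_filter_of_dominated_convergence' (f := 0)
      (fun x => ‖g x‖ₑ ^ p.toReal) (hf.mono fun i hi => hi.enorm.pow_const _)
      (hfg.mono fun i hi => hi.mono fun x hx =>
        ENNReal.rpow_le_rpow (enorm_le_iff_norm_le.2 hx) hp_pos.le)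
      (lintegral_rpow_enorm_lt_top_of_eLpNorm_lt_top hp0 hp hg.2).ne hpow
  have hroot : Tendsto (fun a : ℝ≥0∞ => a ^ (1 / p.toReal)) (𝓝 0) (𝓝 0) := by
    simpa [ENNReal.zero_rpow_of_pos (inv_pos.2 hp_pos)] using
      (ENNReal.continuous_rpow_const (y := 1 / p.toReal)).tendsto 0
  simp_rw [eLpNorm_eq_lintegral_rpow_enorm_toReal hp0 hp]
  exact hroot.comp hlintegral

theorem aestronglyMeasurable_integral_comp_of_measurePreserving {T α E : Type*}
    [MeasurableSpace T] [MeasurableSpace α] [NormedAddCommGroup E] [NormedSpace ℝ E]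
    {ν : Measure T} {μ : Measure α} [SFinite ν] [SFinite μ] {ψ : T → α → α}
    (hψ : Measurable (Function.uncurry ψ)) (hmp : ∀ τ, MeasurePreserving (ψ τ) μ μ)
    {f : α → E} (hf : AEStronglyMeasurable f μ) :
    AEStronglyMeasurable (fun x => ∫ τ, f (ψ τ x) ∂ν) μ := by
  have hskew : MeasurePreserving (fun q : T × α => (q.1, ψ q.1 q.2)) (ν.prod μ) (ν.prod μ) :=
    (MeasurePreserving.id ν).skew_product hψ (.of_forall fun τ => (hmp τ).map_eq)
  have hcomp : AEStronglyMeasurable (fun q : T × α => f (ψ q.1 q.2)) (ν.prod μ) :=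
    (hf.comp_quasiMeasurePreserving Measure.quasiMeasurePreserving_snd)
      |>.comp_quasiMeasurePreserving hskew.quasiMeasurePreserving
  exact (hcomp.comp_quasiMeasurePreserving
    Measure.measurePreserving_swap.quasiMeasurePreserving).integral_prod_right'

theorem tendsto_atTop_of_tendsto_inv_mul {I : ℝ → ℝ} {c : ℝ} (hc : 0 < c)
    (hI : Tendsto (fun t => (1 / t) * I t) atTop (𝓝 c)) : Tendsto I atTop atTop := by
  refine (hI.pos_mul_atTop hc tendsto_id).congr' ?_
  filter_upwards [eventually_gt_atTop 0] with t ht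
  simp only [id]
  field_simp

theorem eLpNorm_eq_of_apply_flow_eq {α E : Type*} [MeasurableSpace α] [NormedAddCommGroup E]
    {μ : Measure α} {ψ : ℝ → α → α} (hψ0 : ∀ x, ψ 0 x = x)
    (hψadd : ∀ s t : ℝ, ψ t ∘ ψ s = ψ (t + s)) {t : ℝ} (hmp : MeasurePreserving (ψ (-t)) μ μ)
    {u v : α → E} (hv : AEStronglyMeasurable v μ) (huv : ∀ x, u (ψ t x) = v x) (p : ℝ≥0∞) :
    eLpNorm u p μ = eLpNorm v p μ := by
  have hu : u = v ∘ ψ (-t) := funext fun y => by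
    rw [Function.comp_apply, ← huv, ← Function.comp_apply (f := ψ t), hψadd, add_neg_cancel,
      hψ0]
  rw [hu, eLpNorm_comp_measurePreserving hv hmp]

theorem IsFlowOf.continuous_orbit {d : ℕ} {v : Torus d → Fin d → ℝ} {ψ : ℝ → Torus d → Torus d}
    (hψ : IsFlowOf d v ψ) (x : Torus d) : Continuous fun t => ψ t x := by
  obtain ⟨X, hXψ, hX⟩ := hψ.2.2 x
  have hproj : Continuous (Torus.proj d) :=
    continuous_pi fun i => (AddCircle.continuous_mk' 1).comp (continuous_apply i)
  simp_rw [← hXψ]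
  exact hproj.comp (continuous_iff_continuousAt.2 fun t => (hX t).continuousAt)

section CharacteristicSolution

variable {α : Type*} {ψ : ℝ → α → α} {φ θ₀ : α → ℝ}

def characteristicSolution (ψ : ℝ → α → α) (φ θ₀ : α → ℝ) (t : ℝ) (x : α) : ℝ :=
  θ₀ x * Real.exp (-∫ τ in (0 : ℝ)..t, φ (ψ τ x))

theorem abs_characteristicSolution_le (hφ0 : ∀ x, 0 ≤ φ x) {t : ℝ} (ht : 0 ≤ t) (x : α) :
    |characteristicSolution ψ φ θ₀ t x| ≤ |θ₀ x| := by
  have hint : 0 ≤ ∫ τ in (0 : ℝ)..t, φ (ψ τ x) :=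
    intervalIntegral.integral_nonneg ht fun τ _ => hφ0 _
  rw [characteristicSolution, abs_mul, Real.abs_exp]
  exact mul_le_of_le_one_right (abs_nonneg _) (Real.exp_le_one_iff.2 (neg_nonpos.2 hint))

theorem tendsto_characteristicSolution_zero {x : α} {c : ℝ} (hc : 0 < c)
    (hx : Tendsto (fun t : ℝ => (1 / t) * ∫ τ in (0 : ℝ)..t, φ (ψ τ x)) atTop (𝓝 c)) :
    Tendsto (fun t => characteristicSolution ψ φ θ₀ t x) atTop (𝓝 0) := by
  have hexp := Real.tendsto_exp_atBot.comp
    (tendsto_neg_atTop_atBot.comp (tendsto_atTop_of_tendsto_inv_mul hc hx))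
  simpa [characteristicSolution] using (tendsto_const_nhds (x := θ₀ x)).mul hexp

variable [MeasurableSpace α] {μ : Measure α}

theorem aestronglyMeasurable_characteristicSolution [SFinite μ]
    (hψ : Measurable (Function.uncurry ψ)) (hmp : ∀ τ, MeasurePreserving (ψ τ) μ μ)
    (hφ : AEStronglyMeasurable φ μ) (hθ₀ : AEStronglyMeasurable θ₀ μ) (t : ℝ) :
    AEStronglyMeasurable (characteristicSolution ψ φ θ₀ t) μ := by
  have hset : ∀ s : Set ℝ, AEStronglyMeasurable (fun x => ∫ τ in s, φ (ψ τ x)) μ := fun s =>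
    aestronglyMeasurable_integral_comp_of_measurePreserving hψ hmp hφ
  -- `∫ τ in 0..t` unfolds to `∫ τ in Ioc 0 t` minus `∫ τ in Ioc t 0`.
  exact hθ₀.mul (Real.continuous_exp.comp_aestronglyMeasurable
    ((hset (Set.Ioc 0 t)).sub (hset (Set.Ioc t 0))).neg)

theorem tendsto_eLpNorm_characteristicSolution [SFinite μ]
    (hψ : Measurable (Function.uncurry ψ)) (hmp : ∀ τ, MeasurePreserving (ψ τ) μ μ)
    (hφ0 : ∀ x, 0 ≤ φ x) (hφ : AEStronglyMeasurable φ μ) {φs : α → ℝ}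
    (hlim : ∀ᵐ x ∂μ,
      Tendsto (fun t : ℝ => (1 / t) * ∫ τ in (0 : ℝ)..t, φ (ψ τ x)) atTop (𝓝 (φs x)))
    (hφs : ∀ᵐ x ∂μ, 0 < φs x) {p : ℝ≥0∞} (hp : p ≠ ∞) (hθ₀ : MemLp θ₀ p μ) :
    Tendsto (fun t => eLpNorm (characteristicSolution ψ φ θ₀ t) p μ) atTop (𝓝 0) :=
  tendsto_eLpNorm_zero_of_dominated hp
    (.of_forall (aestronglyMeasurable_characteristicSolution hψ hmp hφ hθ₀.1)) hθ₀
    ((eventually_ge_atTop 0).mono fun t ht => .of_forall fun x => by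
      simpa only [Real.norm_eq_abs] using abs_characteristicSolution_le hφ0 ht x)
    (by filter_upwards [hlim, hφs] with x hx hpos using tendsto_characteristicSolution_zero hpos hx)

end CharacteristicSolution

theorem transport_damped_decay_of_positive_birkhoff_limit_general
    (d : ℕ)
    (v : Torus d → Fin d → ℝ)
    (ψ : ℝ → Torus d → Torus d) (hflow : IsFlowOf d v ψ)
    -- `v` is divergence free: the flow preserves the normalized Lebesgue measure
    (hψmp : ∀ t : ℝ, MeasurePreserving (ψ t) volume volume)
    (φ : Torus d → ℝ) (hφ0 : ∀ x, 0 ≤ φ x)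
    (hφint : Integrable φ (volume : Measure (Torus d)))
    (φs : Torus d → ℝ)
    (hlim : ∀ᵐ x ∂(volume : Measure (Torus d)),
      Tendsto (fun t : ℝ => (1 / t) * ∫ τ in (0:ℝ)..t, φ (ψ τ x)) atTop (𝓝 (φs x)))
    (hφspos : ∀ᵐ x ∂(volume : Measure (Torus d)), 0 < φs x)
    (p : ℝ)
    (θ₀ : Torus d → ℝ) (hθ₀ : MemLp θ₀ (ENNReal.ofReal p) (volume : Measure (Torus d)))
    (θ : ℝ → Torus d → ℝ)
    (hθ : ∀ t : ℝ, ∀ x : Torus d,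
      θ t (ψ t x) = θ₀ x * Real.exp (-∫ τ in (0:ℝ)..t, φ (ψ τ x))) :
    Tendsto (fun t : ℝ => eLpNorm (θ t) (ENNReal.ofReal p) (volume : Measure (Torus d)))
      atTop (𝓝 0) := by
  have hψ : Measurable (Function.uncurry ψ) :=
    measurable_uncurry_of_continuous_of_measurable hflow.continuous_orbit
      fun t => (hψmp t).measurable
  have hθ_eq (t : ℝ) : eLpNorm (θ t) (ENNReal.ofReal p) volume =
      eLpNorm (characteristicSolution ψ φ θ₀ t) (ENNReal.ofReal p) volume :=
    eLpNorm_eq_of_apply_flow_eq hflow.1 hflow.2.1 (hψmp (-t))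
      (aestronglyMeasurable_characteristicSolution hψ hψmp hφint.1 hθ₀.1 t) (hθ t) _
  simpa only [hθ_eq] using tendsto_eLpNorm_characteristicSolution hψ hψmp hφ0 hφint.1 hlim
    hφspos ENNReal.ofReal_ne_top hθ₀

/-- **Theorem 2.2 (iii): decay of the energy when the Birkhoff limit is a.e. positive.**
Let `d ≥ 1`, let `v : 𝕋^d → ℝ^d` be a Lipschitz divergence-free vector field (so its flow `ψ`
preserves the Lebesgue measure), let `φ ≥ 0` be integrable, and let `φ_*` be the a.e. limit of
the Birkhoff averages `(1/t)∫_0^t φ(ψ(τ,·)) dτ` as `t → +∞`.  Assume `φ_*(x) > 0` for a.e. `x`.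
Let `p ∈ [1,∞)`, `θ₀ ∈ L^p(𝕋^d)`, and let `θ` be the solution of `∂_t θ + v·∇θ = -φ θ`,
`θ(0,·) = θ₀`, given by `θ(t,ψ(t,x)) = θ₀(x) exp(-∫_0^t φ(ψ(τ,x)) dτ)`.
Then `‖θ(t)‖_{L^p} → 0` as `t → +∞`. -/
theorem transport_damped_decay_of_positive_birkhoff_limit
    (d : ℕ) (hd : 1 ≤ d)
    (v : Torus d → Fin d → ℝ) (K : NNReal) (hv : LipschitzWith K v)
    (ψ : ℝ → Torus d → Torus d) (hflow : IsFlowOf d v ψ)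
    -- `v` is divergence free: the flow preserves the normalized Lebesgue measure
    (hψmp : ∀ t : ℝ, MeasurePreserving (ψ t) volume volume)
    (φ : Torus d → ℝ) (hφ0 : ∀ x, 0 ≤ φ x)
    (hφint : Integrable φ (volume : Measure (Torus d)))
    (φs : Torus d → ℝ)
    (hlim : ∀ᵐ x ∂(volume : Measure (Torus d)),
      Tendsto (fun t : ℝ => (1 / t) * ∫ τ in (0:ℝ)..t, φ (ψ τ x)) atTop (𝓝 (φs x)))
    (hφspos : ∀ᵐ x ∂(volume : Measure (Torus d)), 0 < φs x)
    (p : ℝ) (hp : 1 ≤ p)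
    (θ₀ : Torus d → ℝ) (hθ₀ : MemLp θ₀ (ENNReal.ofReal p) (volume : Measure (Torus d)))
    (θ : ℝ → Torus d → ℝ)
    (hθ : ∀ t : ℝ, ∀ x : Torus d,
      θ t (ψ t x) = θ₀ x * Real.exp (-∫ τ in (0:ℝ)..t, φ (ψ τ x))) :
    Tendsto (fun t : ℝ => eLpNorm (θ t) (ENNReal.ofReal p) (volume : Measure (Torus d)))
      atTop (𝓝 0) :=
  transport_damped_decay_of_positive_birkhoff_limit_general d v ψ hflow hψmp φ hφ0 hφint φs hlim
    hφspos p θ₀ hθ₀ θ hθ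

end
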